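/- For every integer Δ ≥ 3, the value α_Δ satisfies 1 < α_Δ < (Δ−1)/(Δ−2); in particular α_Δ ≤ 2 and α_Δ → 1 as Δ → ∞. -/

import Mathlib

/-- `gam Δ x = ∑_{k=0}^{Δ-1} x^k / k!` -/
noncomputable def gam (Δ : ℕ) (x : ℝ) : ℝ :=
  ∑ k ∈ Finset.range Δ, x ^ k / (Nat.factorial k)

/-!
Since `gam (n + 2) x = gam (n + 1) x + x ^ (n + 1) / (n + 1)!`, the defining equation says
`(x - 1) * gam (n + 1) x = x ^ (n + 1) / (n + 1)!`. Bounding `gam (n + 1) x` from below by its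
top term `x ^ n / n!` gives `(n + 1) (x - 1) < x`, i.e. `x < (n + 1) / n`; with `n = Δ - 2` this
is the upper bound, and it tends to `1`.
-/

open Filter Topology

theorem gam_succ (n : ℕ) (x : ℝ) : gam (n + 1) x = gam n x + x ^ n / n.factorial :=
  Finset.sum_range_succ _ _

theorem gam_pos {n : ℕ} (hn : n ≠ 0) {x : ℝ} (hx : 0 ≤ x) : 0 < gam n x :=
  calc 0 < x ^ 0 / (Nat.factorial 0 : ℝ) := by simp
    _ ≤ gam n x :=
      Finset.single_le_sum (f := fun k => x ^ k / (k.factorial : ℝ)) (fun k _ => by positivity)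
        (Finset.mem_range.2 (Nat.pos_of_ne_zero hn))

theorem pow_div_factorial_lt_gam {n : ℕ} (hn : n ≠ 0) {x : ℝ} (hx : 0 ≤ x) :
    x ^ n / n.factorial < gam (n + 1) x := by
  rw [gam_succ]
  linarith [gam_pos hn hx]

theorem sub_one_mul_gam_eq {n : ℕ} {x : ℝ} (h : x * gam n x = gam (n + 1) x) :
    (x - 1) * gam n x = x ^ n / n.factorial := by
  rw [gam_succ] at h
  linear_combination h

theorem lt_of_mul_gam_eq_gam_succ {n : ℕ} (hn : n ≠ 0) {x : ℝ}
    (h : x * gam (n + 1) x = gam (n + 2) x) : x < (n + 1) / n := by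
  have hn' : (0 : ℝ) < n := by positivity
  rw [lt_div_iff₀ hn']
  rcases le_or_gt x 1 with hx | hx
  · nlinarith
  have hc : (0 : ℝ) < x ^ n / n.factorial := by positivity
  have key : (x - 1) * (x ^ n / n.factorial) < x * (x ^ n / n.factorial) / (n + 1) :=
    calc (x - 1) * (x ^ n / n.factorial)
        < (x - 1) * gam (n + 1) x :=
          mul_lt_mul_of_pos_left (pow_div_factorial_lt_gam hn (by linarith)) (by linarith)
      _ = x ^ (n + 1) / (n + 1).factorial := sub_one_mul_gam_eq h
      _ = x * (x ^ n / n.factorial) / (n + 1) := by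
          push_cast [Nat.factorial_succ]
          field_simp
          ring
  rw [lt_div_iff₀ (by positivity), mul_right_comm] at key
  linarith [lt_of_mul_lt_mul_right key hc.le]

/-- For every integer `Δ ≥ 3`, the solution `α_Δ ∈ (1,∞)` of `x·γ_{Δ-1}(x) = γ_Δ(x)`
satisfies `1 < α_Δ < (Δ−1)/(Δ−2)`; in particular `α_Δ ≤ 2` and `α_Δ → 1` as `Δ → ∞`. -/
theorem alpha_bounds (α : ℕ → ℝ)
    (hα : ∀ Δ : ℕ, 3 ≤ Δ → α Δ ∈ Set.Ioi (1 : ℝ) ∧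
      α Δ * gam (Δ - 1) (α Δ) = gam Δ (α Δ)) :
    (∀ Δ : ℕ, 3 ≤ Δ →
      1 < α Δ ∧ α Δ < ((Δ : ℝ) - 1) / ((Δ : ℝ) - 2) ∧ α Δ ≤ 2) ∧
    Filter.Tendsto α Filter.atTop (nhds 1) := by
  have bounds : ∀ Δ : ℕ, 3 ≤ Δ → 1 < α Δ ∧ α Δ < ((Δ : ℝ) - 1) / ((Δ : ℝ) - 2) := by
    intro Δ hΔ
    obtain ⟨n, rfl⟩ : ∃ n, Δ = n + 2 := ⟨Δ - 2, by omega⟩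
    obtain ⟨hgt, heq⟩ := hα (n + 2) hΔ
    have hlt := lt_of_mul_gam_eq_gam_succ (n := n) (by omega) heq
    exact ⟨hgt, by push_cast; convert hlt using 2 <;> ring⟩
  refine ⟨fun Δ hΔ => ⟨(bounds Δ hΔ).1, (bounds Δ hΔ).2, ?_⟩, ?_⟩
  · have h3 : (3 : ℝ) ≤ Δ := by exact_mod_cast hΔ
    have := (bounds Δ hΔ).2
    rw [lt_div_iff₀ (by linarith)] at this
    nlinarith
  · have hlim : Tendsto (fun Δ : ℕ => ((Δ : ℝ) - 1) / ((Δ : ℝ) - 2)) atTop (𝓝 1) := by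
      simpa [sub_eq_neg_add] using tendsto_add_mul_div_add_mul_atTop_nhds (-1 : ℝ) (-2) 1 one_ne_zero
    refine tendsto_of_tendsto_of_tendsto_of_le_of_le' tendsto_const_nhds hlim ?_ ?_ <;>
      filter_upwards [eventually_ge_atTop 3] with Δ hΔ
    exacts [(bounds Δ hΔ).1.le, (bounds Δ hΔ).2.le]
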